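/- Suppose λ = λ(t₀, t) is a scalar function, r = r(λ) with ∂_λ log r ≠ 0, and w(z; λ) satisfies ∂_λ log w(z) = −((w − w⁻¹)/(w + w⁻¹ − η(λ)))·∂_λ log r for all z (with η independent of z). If moreover ∂_{t₀} log w(z) = −(∂_{t₀} + D(z))log r and (∂_{t₀}+D(z))λ = −(∂_λ log w(z)/∂_λ log r)·∂_{t₀}λ, then D(z)λ = ((e^{iξ}/(w(z)−e^{iξ}) + e^{−iξ}/(w(z)−e^{−iξ}))·∂_{t₀}λ, where η = 2cos ξ. -/
import Mathlib


open Complex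

/-- Derivation of the hydrodynamic-type equation (or8) from the symmetric
Löwner equation (or4).  The scalars `Lw`, `Lr`, `T0w`, `T0r`, `Dr`, `Dλ`,
`T0λ` stand for `∂_λ log w(z)`, `∂_λ log r`, `∂_{t₀} log w(z)`,
`∂_{t₀} log r`, `D(z) log r`, `D(z)λ` and `∂_{t₀}λ` respectively, and
`η(λ) = 2 cos ξ(λ)`. -/
theorem hydrodynamic_equation_from_symmetric_loewner
    (w : ℂ) (ξ : ℝ) (Lw Lr T0w T0r Dr Dlam T0lam : ℂ)
    (hw0 : w ≠ 0) (hw1 : w ≠ Complex.exp (I * ξ)) (hw2 : w ≠ Complex.exp (-(I * ξ)))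
    (hLr : Lr ≠ 0)
    (hloewner : Lw = -((w - w⁻¹) / (w + w⁻¹ - 2 * Real.cos ξ)) * Lr)
    (ht0 : T0w = -(T0r + Dr))
    (hlam : T0lam + Dlam = -(Lw / Lr) * T0lam) :
    Dlam = (Complex.exp (I * ξ) / (w - Complex.exp (I * ξ)) +
          Complex.exp (-(I * ξ)) / (w - Complex.exp (-(I * ξ)))) * T0lam := by
  set a := Complex.exp (I * ξ) with ha
  set b := Complex.exp (-(I * ξ)) with hb
  have hab : a * b = 1 := by
    rw [ha, hb, ← Complex.exp_add]
    simp
  have hc : ((Real.cos ξ : ℝ) : ℂ) = (a + b) / 2 := by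
    rw [Complex.ofReal_cos, Complex.cos, ha, hb]
    ring_nf
  have h1 : w - a ≠ 0 := sub_ne_zero.mpr hw1
  have h2 : w - b ≠ 0 := sub_ne_zero.mpr hw2
  rw [hc] at hloewner
  have hd : w + w⁻¹ - 2 * ((a + b) / 2) ≠ 0 := by
    have heq : w + w⁻¹ - 2 * ((a + b) / 2) = (w - a) * (w - b) / w := by
      field_simp
      linear_combination -hab
    rw [heq]
    exact div_ne_zero (mul_ne_zero h1 h2) hw0
  have key : Lw / Lr = -((w - w⁻¹) / (w + w⁻¹ - 2 * ((a + b) / 2))) := by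
    rw [hloewner, mul_div_assoc, div_self hLr, mul_one]
  rw [key] at hlam
  have hD : Dlam = ((w - w⁻¹) / (w + w⁻¹ - 2 * ((a + b) / 2))) * T0lam - T0lam := by
    linear_combination hlam
  have heq : w + w⁻¹ - 2 * ((a + b) / 2) = (w - a) * (w - b) / w := by
    field_simp
    linear_combination -hab
  rw [heq] at hD
  rw [hD]
  field_simp
  ring_nf
  linear_combination T0lam * hab
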